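/- arXiv:1705.07509 — 3 statements merged into one kernel-verified Lean document; each statement's English description precedes it below -/
import Mathlib

section
/- Define the efficient score for q as ℓ̃_q(x) = (1/q)·1{x ≤ τ} - (∑_{k=0}^{τ} R_θ(k))/(1 - q·∑_{k=0}^{τ} R_θ(k))·1{x > τ} + R_θ(0)/(1 - q·R_θ(0)) for x ≥ 1. Then ∑_{x≥1} ℓ̃_q(x)·f⁺(x) = 0, where f⁺(x) = (q·R_θ(x) + (1-q)F(x))/(1 - q·R_θ(0)). -/
/-!
For `x ≥ 1` the score is a step function: `1 / (q (1 - q R₀))` on `1, …, τ` and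
`R₀ / (1 - q R₀) - A / (1 - q A)` beyond `τ`. Since `F` vanishes up to `τ`, the unnormalised
mixture `q R + (1 - q) F` puts mass `q (A - R₀)` on `1, …, τ` and mass `q (1 - A) + (1 - q) = 1 - q A`
beyond `τ`, so the two contributions to the mean are `± (A - R₀) / (1 - q R₀)²`.
-/

open Finset

theorem HasSum.ite_one_le_step_mul {g : ℕ → ℝ} {t : ℝ} (τ : ℕ) (a b : ℝ)
    (hg : HasSum (fun i => g (i + (τ + 1))) t) :
    HasSum (fun x => if 1 ≤ x then (if x ≤ τ then a else b) * g x else 0)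
      (a * ∑ i ∈ range τ, g (i + 1) + b * t) := by
  set f : ℕ → ℝ := fun x => if 1 ≤ x then (if x ≤ τ then a else b) * g x else 0
  have htail : HasSum (fun i => f (i + (τ + 1))) (b * t) := by
    refine (hg.mul_left b).congr_fun fun i => ?_
    simp only [f, if_pos (by omega : 1 ≤ i + (τ + 1)), if_neg (by omega : ¬ i + (τ + 1) ≤ τ)]
  have hhead : ∑ i ∈ range (τ + 1), f i = a * ∑ i ∈ range τ, g (i + 1) := by
    rw [sum_range_succ', mul_sum]
    refine (add_eq_left.2 (by simp [f])).trans (sum_congr rfl fun i hi => ?_)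
    simp only [f, if_pos (by omega : 1 ≤ i + 1), if_pos (by simp at hi; omega : i + 1 ≤ τ)]
  simpa only [hhead] using htail.sum_range_add

theorem score_eq_step {q r A : ℝ} (hq : q ≠ 0) (hr : 1 - q * r ≠ 0) (τ x : ℕ) :
    (if x ≤ τ then 1 / q else 0) - (if τ < x then A / (1 - q * A) else 0) + r / (1 - q * r) =
      (if x ≤ τ then 1 / (q * (1 - q * r)) else r / (1 - q * r) - A / (1 - q * A)) := by
  by_cases hx : x ≤ τ
  · rw [if_pos hx, if_neg (not_lt.2 hx), if_pos hx]
    field_simp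
    ring
  · rw [if_neg hx, if_pos (not_le.1 hx), if_neg hx]
    ring

section Mixture

variable {R F : ℕ → ℝ} {τ : ℕ}

theorem sum_range_mixture_succ (q : ℝ) (hF : ∀ x, x ≤ τ → F x = 0) :
    ∑ i ∈ range τ, (q * R (i + 1) + (1 - q) * F (i + 1)) =
      q * (∑ k ∈ range (τ + 1), R k - R 0) := by
  rw [sum_range_succ', add_sub_cancel_right, mul_sum]
  refine sum_congr rfl fun i hi => ?_
  rw [hF (i + 1) (mem_range.1 hi), mul_zero, add_zero]

theorem hasSum_mixture_nat_add (q : ℝ) (hR : HasSum R 1) (hF : HasSum F 1)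
    (hFτ : ∀ x, x ≤ τ → F x = 0) :
    HasSum (fun i => q * R (i + (τ + 1)) + (1 - q) * F (i + (τ + 1)))
      (q * (1 - ∑ k ∈ range (τ + 1), R k) + (1 - q)) := by
  have hFhead : ∑ k ∈ range (τ + 1), F k = 0 :=
    sum_eq_zero fun k hk => hFτ k (Nat.lt_succ_iff.1 (mem_range.1 hk))
  simpa only [hFhead, sub_zero, mul_one] using
    (((hasSum_nat_add_iff' (τ + 1)).2 hR).mul_left q).add
      (((hasSum_nat_add_iff' (τ + 1)).2 hF).mul_left (1 - q))

end Mixture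

theorem stmt_12_general (R F : ℕ → ℝ) (q : ℝ) (τ : ℕ)
    (hq : 0 < q) (hRsummable : Summable R) (hRsum : ∑' x, R x = 1)
    (hFsummable : Summable F) (hFsum : ∑' x, F x = 1)
    (hFsupp : ∀ x, x ≤ τ → F x = 0)
    (hden0 : q * R 0 < 1)
    (hdenA : q * ∑ k ∈ Finset.range (τ + 1), R k < 1) :
    let A : ℝ := ∑ k ∈ Finset.range (τ + 1), R k
    let fplus : ℕ → ℝ := fun x => (q * R x + (1 - q) * F x) / (1 - q * R 0)
    let score : ℕ → ℝ := fun x =>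
      (if x ≤ τ then 1 / q else 0) - (if τ < x then A / (1 - q * A) else 0)
        + R 0 / (1 - q * R 0)
    (∑' x : ℕ, if 1 ≤ x then score x * fplus x else 0) = 0 := by
  intro A fplus score
  have hD : 1 - q * R 0 ≠ 0 := by linarith
  have hDA : 1 - q * A ≠ 0 := by linarith
  have htail : HasSum (fun i => fplus (i + (τ + 1))) ((q * (1 - A) + (1 - q)) / (1 - q * R 0)) :=
    (hasSum_mixture_nat_add q (hRsum ▸ hRsummable.hasSum) (hFsum ▸ hFsummable.hasSum)
      hFsupp).div_const _
  have hmean := htail.ite_one_le_step_mul τ (1 / (q * (1 - q * R 0)))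
    (R 0 / (1 - q * R 0) - A / (1 - q * A))
  rw [← sum_div, sum_range_mixture_succ q hFsupp] at hmean
  refine (hmean.congr_fun fun x => ?_).tsum_eq.trans ?_
  · simp only [score, score_eq_step hq.ne' hD]
  · field_simp
    ring

/-- The efficient score for `q` has zero mean under the zero-truncated mixture:
`∑_{x≥1} ℓ̃_q(x) f⁺(x) = 0`. -/
theorem stmt_12 (R F : ℕ → ℝ) (q : ℝ) (τ : ℕ)
    (hq : 0 < q) (hq1 : q < 1) (hτ : 1 ≤ τ)
    (hR : ∀ x, 0 ≤ R x) (hRsummable : Summable R) (hRsum : ∑' x, R x = 1)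
    (hF : ∀ x, 0 ≤ F x) (hFsummable : Summable F) (hFsum : ∑' x, F x = 1)
    (hFsupp : ∀ x, x ≤ τ → F x = 0)
    (hden0 : q * R 0 < 1)
    (hdenA : q * ∑ k ∈ Finset.range (τ + 1), R k < 1) :
    let A : ℝ := ∑ k ∈ Finset.range (τ + 1), R k
    let fplus : ℕ → ℝ := fun x => (q * R x + (1 - q) * F x) / (1 - q * R 0)
    let score : ℕ → ℝ := fun x =>
      (if x ≤ τ then 1 / q else 0) - (if τ < x then A / (1 - q * A) else 0)
        + R 0 / (1 - q * R 0)
    (∑' x : ℕ, if 1 ≤ x then score x * fplus x else 0) = 0 :=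
  stmt_12_general R F q τ hq hRsummable hRsum hFsummable hFsum hFsupp hden0 hdenA
end

section
/- With ℓ̃_q as defined (efficient score for q), the efficient Fisher information Ĩ_q = ∑_{x≥1} ℓ̃_q(x)² f⁺(x) equals (1/(1 - q R_θ(0)))·{ (1/q)·∑_{x=1}^{τ} R_θ(x) + (∑_{x=0}^{τ} R_θ(x))²/(1 - q·∑_{x=0}^{τ} R_θ(x)) - R_θ(0)²/(1 - q·R_θ(0)) }. -/
/-!
On `x ≥ 1` the score takes only two values: `1/q + R 0/(1 - q R 0)` on `[1, τ]` and
`R 0/(1 - q R 0) - A/(1 - q A)` beyond `τ`. As `F` vanishes on `[0, τ]`, `f⁺` puts mass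
`q S/(1 - q R 0)` on `[1, τ]` (with `S = ∑_{x=1}^τ R x`) and `(1 - q A)/(1 - q R 0)` beyond, so the
information is a two-term sum, and the identity is algebra once `A = R 0 + S`.
-/

open Finset

lemma sum_range_succ_eq_add_sum_Icc_one {M : Type*} [AddCommMonoid M] (f : ℕ → M) (n : ℕ) :
    ∑ x ∈ range (n + 1), f x = f 0 + ∑ x ∈ Icc 1 n, f x := by
  rw [Nat.range_succ_eq_Icc_zero, ← insert_Icc_add_one_left_eq_Icc n.zero_le,
    sum_insert (by simp)]
  rfl

lemma hasSum_ite_step_mul {α : Type*} [Ring α] [TopologicalSpace α] [IsTopologicalRing α]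
    {w : ℕ → α} {s : α} (hw : HasSum w s) (τ : ℕ) (a b : α) :
    HasSum (fun x => if 1 ≤ x then (if x ≤ τ then a else b) * w x else 0)
      (a * ∑ x ∈ Icc 1 τ, w x + b * (s - ∑ x ∈ range (τ + 1), w x)) := by
  have hhead : (∑ x ∈ range (τ + 1), if 1 ≤ x then (if x ≤ τ then a else b) * w x else 0)
      = a * ∑ x ∈ Icc 1 τ, w x := by
    rw [sum_range_succ_eq_add_sum_Icc_one, if_neg (by simp), zero_add, mul_sum]
    exact sum_congr rfl fun x hx => by rw [if_pos (mem_Icc.1 hx).1, if_pos (mem_Icc.1 hx).2]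
  rw [← hasSum_nat_add_iff' (τ + 1), hhead, add_sub_cancel_left]
  refine (((hasSum_nat_add_iff' (τ + 1)).2 hw).mul_left b).congr_fun fun n => ?_
  rw [if_pos (by omega), if_neg (by omega)]

theorem stmt_13_general (R F : ℕ → ℝ) (q : ℝ) (τ : ℕ)
    (hq : 0 < q)
    (hRsummable : Summable R) (hRsum : ∑' x, R x = 1)
    (hFsummable : Summable F) (hFsum : ∑' x, F x = 1)
    (hFsupp : ∀ x, x ≤ τ → F x = 0)
    (hden0 : q * R 0 < 1)
    (hdenA : q * ∑ k ∈ Finset.range (τ + 1), R k < 1) :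
    let A : ℝ := ∑ k ∈ Finset.range (τ + 1), R k
    let fplus : ℕ → ℝ := fun x => (q * R x + (1 - q) * F x) / (1 - q * R 0)
    let score : ℕ → ℝ := fun x =>
      (if x ≤ τ then 1 / q else 0) - (if τ < x then A / (1 - q * A) else 0)
        + R 0 / (1 - q * R 0)
    (∑' x : ℕ, if 1 ≤ x then score x ^ 2 * fplus x else 0)
      = (1 / (1 - q * R 0)) *
        ((1 / q) * (∑ x ∈ Finset.Icc 1 τ, R x)
          + A ^ 2 / (1 - q * A) - R 0 ^ 2 / (1 - q * R 0)) := by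
  intro A fplus score
  have hD : 1 - q * R 0 ≠ 0 := by linarith
  have hE : 1 - q * A ≠ 0 := by linarith
  have hscore : ∀ x, score x ^ 2 = if x ≤ τ then (1 / q + R 0 / (1 - q * R 0)) ^ 2
      else (R 0 / (1 - q * R 0) - A / (1 - q * A)) ^ 2 := fun x => by
    by_cases hx : x ≤ τ
    · simp only [score, if_pos hx, if_neg (not_lt.2 hx)]; ring
    · simp only [score, if_neg hx, if_pos (not_le.1 hx)]; ring
  have hfplus : HasSum fplus (1 / (1 - q * R 0)) := by
    have h := ((hRsummable.hasSum.mul_left q).add (hFsummable.hasSum.mul_left (1 - q))).div_const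
      (1 - q * R 0)
    rwa [hRsum, hFsum, mul_one, mul_one, add_sub_cancel] at h
  have hfplus_fin : ∀ s : Finset ℕ, (∀ x ∈ s, x ≤ τ) →
      ∑ x ∈ s, fplus x = q * (∑ x ∈ s, R x) / (1 - q * R 0) := fun s hs => by
    simp only [fplus, ← sum_div, mul_sum]
    exact congrArg (· / _) (sum_congr rfl fun x hx => by rw [hFsupp x (hs x hx)]; ring)
  simp only [hscore]
  rw [(hasSum_ite_step_mul hfplus τ _ _).tsum_eq, hfplus_fin _ fun x hx => (mem_Icc.1 hx).2,
    hfplus_fin _ fun x hx => Nat.lt_add_one_iff.1 (mem_range.1 hx)]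
  simp only [A, sum_range_succ_eq_add_sum_Icc_one] at hE ⊢
  field_simp
  ring

/-- The efficient Fisher information for `q`:
`Ĩ_q = ∑_{x≥1} ℓ̃_q(x)² f⁺(x)` equals
`(1/(1-qR(0)))·{ (1/q)∑_{x=1}^τ R(x) + (∑_{x=0}^τ R(x))²/(1-q∑_{x=0}^τ R(x))
  - R(0)²/(1-qR(0)) }`. -/
theorem stmt_13 (R F : ℕ → ℝ) (q : ℝ) (τ : ℕ)
    (hq : 0 < q) (hq1 : q < 1) (hτ : 1 ≤ τ)
    (hR : ∀ x, 0 ≤ R x) (hRsummable : Summable R) (hRsum : ∑' x, R x = 1)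
    (hF : ∀ x, 0 ≤ F x) (hFsummable : Summable F) (hFsum : ∑' x, F x = 1)
    (hFsupp : ∀ x, x ≤ τ → F x = 0)
    (hden0 : q * R 0 < 1)
    (hdenA : q * ∑ k ∈ Finset.range (τ + 1), R k < 1) :
    let A : ℝ := ∑ k ∈ Finset.range (τ + 1), R k
    let fplus : ℕ → ℝ := fun x => (q * R x + (1 - q) * F x) / (1 - q * R 0)
    let score : ℕ → ℝ := fun x =>
      (if x ≤ τ then 1 / q else 0) - (if τ < x then A / (1 - q * A) else 0)
        + R 0 / (1 - q * R 0)
    (∑' x : ℕ, if 1 ≤ x then score x ^ 2 * fplus x else 0)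
      = (1 / (1 - q * R 0)) *
        ((1 / q) * (∑ x ∈ Finset.Icc 1 τ, R x)
          + A ^ 2 / (1 - q * A) - R 0 ^ 2 / (1 - q * R 0)) :=
  stmt_13_general R F q τ hq hRsummable hRsum hFsummable hFsum hFsupp hden0 hdenA
end

section
/- The equation D_τ/q + D·R_θ(0)/(1 - q·R_θ(0)) - (D - D_τ)·(∑_{k=0}^{τ} R_θ(k))/(1 - q·∑_{k=0}^{τ} R_θ(k)) = 0 in q ∈ (0,1) has the solution q = D_τ/(D·∑_{k=1}^{τ} R_θ(k) + D_τ·R_θ(0)). -/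
/-! With `X = D s + D_τ a`, where `a = R(0)` and `s = ∑_{k=1}^τ R(k)`, the point `q̂ = D_τ / X` gives
`1 - q̂ a = D s / X` and `1 - q̂ (a + s) = (D - D_τ) s / X`, so the three terms of the score equation
become `X`, `a X / s` and `-(a + s) X / s`, which cancel. -/

open Finset

theorem sum_range_succ_eq_add_sum_Icc {M : Type*} [AddCommMonoid M] (f : ℕ → M) (n : ℕ) :
    ∑ k ∈ range (n + 1), f k = f 0 + ∑ k ∈ Icc 1 n, f k := by
  rw [← Nat.Ico_zero_eq_range, sum_eq_sum_Ico_succ_bot n.add_one_pos, zero_add,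
    Ico_add_one_right_eq_Icc]

theorem score_eq_zero_at_div {a s D Dτ : ℝ} (hs : s ≠ 0) (hD : D ≠ 0) (hDτ : Dτ ≠ 0)
    (hDDτ : D - Dτ ≠ 0) (hX : D * s + Dτ * a ≠ 0) :
    let q := Dτ / (D * s + Dτ * a)
    Dτ / q + D * a / (1 - q * a) - (D - Dτ) * (a + s) / (1 - q * (a + s)) = 0 := by
  intro q
  have h₁ : 1 - q * a = D * s / (D * s + Dτ * a) := by
    simp only [q]
    field_simp
    ring
  have h₂ : 1 - q * (a + s) = (D - Dτ) * s / (D * s + Dτ * a) := by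
    simp only [q]
    field_simp
    ring
  rw [h₁, h₂, div_div_cancel₀ hDτ]
  field_simp
  ring

theorem stmt_14_general (R : ℕ → ℝ) (τ : ℕ) (D Dτ : ℝ)
    (hτ : 1 ≤ τ) (hRpos : ∀ k, k ≤ τ → 0 < R k)
    (hDτ : 0 < Dτ) (hD : Dτ < D) :
    let qhat : ℝ := Dτ / (D * (∑ k ∈ Finset.Icc 1 τ, R k) + Dτ * R 0)
    Dτ / qhat + D * R 0 / (1 - qhat * R 0)
      - (D - Dτ) * (∑ k ∈ Finset.range (τ + 1), R k) /
          (1 - qhat * ∑ k ∈ Finset.range (τ + 1), R k) = 0 := by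
  have hs : 0 < ∑ k ∈ Icc 1 τ, R k :=
    sum_pos (fun k hk => hRpos k (mem_Icc.mp hk).2) (nonempty_Icc.mpr hτ)
  have ha : 0 < R 0 := hRpos 0 (Nat.zero_le τ)
  have hDpos : 0 < D := hDτ.trans hD
  rw [sum_range_succ_eq_add_sum_Icc]
  exact score_eq_zero_at_div hs.ne' hDpos.ne' hDτ.ne' (sub_ne_zero.mpr hD.ne') (by positivity)

/-- `q̂ = D_τ/(D·∑_{k=1}^τ R(k) + D_τ·R(0))` solves the efficient score equation
`D_τ/q + D·R(0)/(1-qR(0)) - (D-D_τ)·(∑_{k=0}^τ R(k))/(1-q∑_{k=0}^τ R(k)) = 0`. -/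
theorem stmt_14 (R : ℕ → ℝ) (τ : ℕ) (D Dτ : ℝ)
    (hR : ∀ x, 0 ≤ R x) (hRsum : ∑' x, R x = 1)
    (hτ : 1 ≤ τ) (hRpos : ∀ k, k ≤ τ → 0 < R k)
    (hDτ : 0 < Dτ) (hD : Dτ < D) :
    let qhat : ℝ := Dτ / (D * (∑ k ∈ Finset.Icc 1 τ, R k) + Dτ * R 0)
    Dτ / qhat + D * R 0 / (1 - qhat * R 0)
      - (D - Dτ) * (∑ k ∈ Finset.range (τ + 1), R k) /
          (1 - qhat * ∑ k ∈ Finset.range (τ + 1), R k) = 0 :=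
  stmt_14_general R τ D Dτ hτ hRpos hDτ hD
end
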